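/- arXiv:1709.02999 — 3 statements merged into one kernel-verified Lean document; each statement's English description precedes it below -/
import Mathlib

section
/- If the stepsize satisfies α ≤ (1 + λ_n(Wᵗ))/L, then starting from x_0 = 0 the DGDᵗ iterates satisfy Σ_{i=1}^n f_i(x_{i,k}) ≤ Σ_{i=1}^n f_i(0) for all k ≥ 0, and the concatenated gradient is bounded: ‖∇f(x_k)‖ ≤ D := √(2L Σ_{i=1}^n (f_i(0) − f_i*)) for all k ≥ 1, where f_i* = f_i(x_i*) and x_i* = argmin_x f_i(x). -/
open Finset Filter

noncomputable section

/-- A block `ℝ^p` with the Euclidean norm. -/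
abbrev Vec (p : ℕ) := EuclideanSpace ℝ (Fin p)

/-- The concatenated space `ℝ^{np}` (n blocks of size p) with the Euclidean norm. -/
abbrev CVec (n p : ℕ) := PiLp 2 (fun _ : Fin n => Vec p)

/-- Action of the Kronecker product `W ⊗ I_p` on a concatenated vector of `ℝ^{np}`. -/
def kron {n p : ℕ} (W : Matrix (Fin n) (Fin n) ℝ) (x : CVec n p) : CVec n p :=
  WithLp.toLp 2 (fun i => ∑ j, W i j • x j)

/-- Concatenated gradient `∇f(x) = (∇f₁(x₁); …; ∇fₙ(xₙ))`. -/
def gradConcat {n p : ℕ} (f : Fin n → Vec p → ℝ) (x : CVec n p) : CVec n p :=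
  WithLp.toLp 2 (fun i => gradient (f i) (x i))

/-! DGDᵗ is gradient descent with step `α` on the Lyapunov function
`ξ(x) = ∑ᵢ fᵢ(xᵢ) + ⟪(I - Zᵗ) x, x⟫ / (2α)`, whose gradient is `L + (1 - λₙ(Wᵗ))/α`-Lipschitz;
the stepsize condition says exactly that this constant is at most `2/α`, so the descent lemma makes
`ξ` nonincreasing along the iterates. Since `Wᵗ` is doubly stochastic the penalty term is
nonnegative, whence `∑ᵢ fᵢ(x_{i,k}) ≤ ξ(x_k) ≤ ξ(0) = ∑ᵢ fᵢ(0)`. The gradient bound follows from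
`‖∇fᵢ(y)‖² ≤ 2Lᵢ (fᵢ(y) - fᵢ*)`, the descent lemma applied to the step `y - ∇fᵢ(y)/Lᵢ`. -/

open scoped RealInnerProductSpace NNReal

section Descent

variable {E : Type*} [NormedAddCommGroup E] [InnerProductSpace ℝ E] [CompleteSpace E]

theorem hasDerivAt_comp_add_smul {φ : E → ℝ} (hφ : Differentiable ℝ φ) (y d : E) (s : ℝ) :
    HasDerivAt (fun s : ℝ => φ (y + s • d)) ⟪gradient φ (y + s • d), d⟫ s := by
  have hline : HasDerivAt (fun s : ℝ => y + s • d) d s := by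
    simpa using ((hasDerivAt_id s).smul_const d).const_add y
  simpa [InnerProductSpace.toDual_apply_apply, Function.comp_def] using
    (hφ (y + s • d)).hasGradientAt.hasFDerivAt.comp_hasDerivAt s hline

theorem le_add_inner_gradient_add_half_mul_sq {φ : E → ℝ} {K : ℝ≥0} (hφ : Differentiable ℝ φ)
    (hK : LipschitzWith K (gradient φ)) (y d : E) :
    φ (y + d) ≤ φ y + ⟪gradient φ y, d⟫ + K / 2 * ‖d‖ ^ 2 := by
  have hslope : ∀ s, 0 ≤ s → ⟪gradient φ (y + s • d), d⟫ ≤ ⟪gradient φ y, d⟫ + K * ‖d‖ ^ 2 * s := by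
    intro s hs
    have hgrad : ‖gradient φ (y + s • d) - gradient φ y‖ ≤ K * (s * ‖d‖) := by
      simpa [dist_eq_norm, norm_smul, abs_of_nonneg hs] using hK.dist_le_mul (y + s • d) y
    calc ⟪gradient φ (y + s • d), d⟫
        = ⟪gradient φ y, d⟫ + ⟪gradient φ (y + s • d) - gradient φ y, d⟫ := by
          rw [inner_sub_left, add_sub_cancel]
      _ ≤ ⟪gradient φ y, d⟫ + ‖gradient φ (y + s • d) - gradient φ y‖ * ‖d‖ := by
          gcongr; exact real_inner_le_norm _ _
      _ ≤ ⟪gradient φ y, d⟫ + K * (s * ‖d‖) * ‖d‖ := by gcongr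
      _ = ⟪gradient φ y, d⟫ + K * ‖d‖ ^ 2 * s := by ring
  have hB : ∀ s : ℝ, HasDerivAt (fun s => φ y + s * ⟪gradient φ y, d⟫ + K * ‖d‖ ^ 2 * s ^ 2 / 2)
      (⟪gradient φ y, d⟫ + K * ‖d‖ ^ 2 * s) s := by
    intro s
    refine (((hasDerivAt_mul_const ⟪gradient φ y, d⟫).const_add (φ y)).add
      (((hasDerivAt_pow 2 s).const_mul (K * ‖d‖ ^ 2)).div_const 2)).congr_deriv ?_
    push_cast; ring
  have := image_le_of_deriv_right_le_deriv_boundary (a := 0) (b := 1)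
    (fun s _ => (hasDerivAt_comp_add_smul hφ y d s).continuousAt.continuousWithinAt)
    (fun s _ => (hasDerivAt_comp_add_smul hφ y d s).hasDerivWithinAt)
    (by simp) (fun s _ => (hB s).continuousAt.continuousWithinAt)
    (fun s _ => (hB s).hasDerivWithinAt) (fun s hs => hslope s hs.1)
    (Set.right_mem_Icc.2 zero_le_one)
  simp only [one_smul, one_mul, one_pow] at this
  linarith

theorem norm_gradient_sq_le {φ : E → ℝ} {K : ℝ≥0} (hφ : Differentiable ℝ φ)
    (hK : LipschitzWith K (gradient φ)) (hK₀ : 0 < K) {ys : E} (hmin : ∀ z, φ ys ≤ φ z) (y : E) :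
    ‖gradient φ y‖ ^ 2 ≤ 2 * K * (φ y - φ ys) := by
  have hKpos : (0 : ℝ) < K := hK₀
  set G := ‖gradient φ y‖ ^ 2
  set d := -((K : ℝ)⁻¹ • gradient φ y)
  have hdesc := le_add_inner_gradient_add_half_mul_sq hφ hK y d
  have hdecrease : ⟪gradient φ y, d⟫ + K / 2 * ‖d‖ ^ 2 = -(G / (2 * K)) := by
    rw [inner_neg_right, real_inner_smul_right, real_inner_self_eq_norm_sq, norm_neg, norm_smul,
      Real.norm_of_nonneg (inv_nonneg.2 hKpos.le), mul_pow]
    field_simp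
    ring
  calc G = 2 * K * (G / (2 * K)) := by field_simp
    _ ≤ 2 * K * (φ y - φ ys) := by
        gcongr
        linarith [hmin (y + d)]

end Descent

section Lyapunov

variable {E : Type*} [NormedAddCommGroup E] [InnerProductSpace ℝ E]

def lyapunov (F : E → ℝ) (Z : E →ₗ[ℝ] E) (α : ℝ) (z : E) : ℝ :=
  F z + ⟪z - Z z, z⟫ / (2 * α)

theorem lyapunov_zero (F : E → ℝ) (Z : E →ₗ[ℝ] E) (α : ℝ) : lyapunov F Z α 0 = F 0 := by
  simp [lyapunov]

theorem le_lyapunov {F : E → ℝ} {Z : E →ₗ[ℝ] E} {α : ℝ} (hα : 0 < α) {z : E}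
    (hZ : ⟪Z z, z⟫ ≤ ‖z‖ ^ 2) : F z ≤ lyapunov F Z α z := by
  rw [lyapunov, le_add_iff_nonneg_right, inner_sub_left, real_inner_self_eq_norm_sq]
  exact div_nonneg (sub_nonneg.2 hZ) (by positivity)

theorem lyapunov_step_le {F : E → ℝ} {g : E → E} {Z : E →ₗ[ℝ] E} {L lam α : ℝ}
    (hF : ∀ z d, F (z + d) ≤ F z + ⟪g z, d⟫ + L / 2 * ‖d‖ ^ 2)
    (hZ : Z.IsSymmetric) (hlam : ∀ d, lam * ‖d‖ ^ 2 ≤ ⟪Z d, d⟫)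
    (hα : 0 < α) (hαL : α * L ≤ 1 + lam) (z : E) :
    lyapunov F Z α (Z z - α • g z) ≤ lyapunov F Z α z := by
  set d := Z z - α • g z - z
  have hz : Z z - α • g z = z + d := (add_sub_cancel z _).symm
  have hgrad : α * ⟪g z, d⟫ = -⟪z - Z z, d⟫ - ‖d‖ ^ 2 := by
    have hstep : α • g z = -(z - Z z) - d := by simp only [d]; abel
    rw [← real_inner_smul_left, hstep, inner_sub_left, inner_neg_left, real_inner_self_eq_norm_sq]
  have hpenalty : ⟪z + d - Z (z + d), z + d⟫
      = ⟪z - Z z, z⟫ + 2 * ⟪z - Z z, d⟫ + (‖d‖ ^ 2 - ⟪Z d, d⟫) := by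
    simp only [map_add, inner_add_left, inner_add_right, inner_sub_left, real_inner_self_eq_norm_sq,
      hZ d z, real_inner_comm z d, real_inner_comm (Z z) d]
    ring
  have hcurv : (‖d‖ ^ 2 - ⟪Z d, d⟫) / (2 * α) ≤ (1 - lam) * ‖d‖ ^ 2 / (2 * α) := by
    gcongr; linarith [hlam d]
  calc lyapunov F Z α (Z z - α • g z)
      = F (z + d) + ⟪z - Z z, z⟫ / (2 * α) + ⟪z - Z z, d⟫ / α
          + (‖d‖ ^ 2 - ⟪Z d, d⟫) / (2 * α) := by
        rw [hz, lyapunov, hpenalty]; field_simp; ring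
    _ ≤ F z + ⟪g z, d⟫ + L / 2 * ‖d‖ ^ 2 + ⟪z - Z z, z⟫ / (2 * α) + ⟪z - Z z, d⟫ / α
          + (1 - lam) * ‖d‖ ^ 2 / (2 * α) := by
        linarith [hF z d, hcurv]
    _ = lyapunov F Z α z - (1 + lam - α * L) * ‖d‖ ^ 2 / (2 * α) := by
        rw [lyapunov]
        field_simp
        linear_combination 2 * hgrad
    _ ≤ lyapunov F Z α z := by
        have : 0 ≤ 1 + lam - α * L := by linarith
        linarith [show 0 ≤ (1 + lam - α * L) * ‖d‖ ^ 2 / (2 * α) by positivity]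

end Lyapunov

theorem Matrix.IsHermitian.mul_norm_sq_le_inner_toEuclideanLin {ι : Type*} [Fintype ι]
    [DecidableEq ι] {M : Matrix ι ι ℝ} (hM : M.IsHermitian) {lam : ℝ}
    (hlam : ∀ i, lam ≤ hM.eigenvalues i) (v : EuclideanSpace ℝ ι) :
    lam * ‖v‖ ^ 2 ≤ ⟪M.toEuclideanLin v, v⟫ := by
  set b := hM.eigenvectorBasis
  have hb : ∀ i, M.toEuclideanLin (b i) = hM.eigenvalues i • b i := fun i => by
    rw [Matrix.toLpLin_apply, hM.mulVec_eigenvectorBasis]; rfl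
  have hsymm := Matrix.isSymmetric_toEuclideanLin_iff.mpr hM
  calc lam * ‖v‖ ^ 2 = ∑ i, lam * ⟪b i, v⟫ ^ 2 := by
        rw [← b.sum_sq_inner_right, Finset.mul_sum]
    _ ≤ ∑ i, hM.eigenvalues i * ⟪b i, v⟫ ^ 2 := by
        gcongr with i; exact hlam i
    _ = ⟪M.toEuclideanLin v, v⟫ := by
        rw [← b.sum_inner_mul_inner]
        refine Finset.sum_congr rfl fun i _ => ?_
        rw [hsymm, hb, real_inner_smul_right, real_inner_comm v]
        ring

section Consensus

variable {n p : ℕ}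

theorem inner_kron (M : Matrix (Fin n) (Fin n) ℝ) (x y : CVec n p) :
    ⟪kron M x, y⟫ = ∑ i, ∑ j, M i j * ⟪x j, y i⟫ := by
  rw [PiLp.inner_apply]
  simp only [kron, PiLp.toLp_apply, sum_inner, real_inner_smul_left]

theorem inner_kron_comm {M : Matrix (Fin n) (Fin n) ℝ} (hM : M.IsHermitian) (x y : CVec n p) :
    ⟪kron M x, y⟫ = ⟪x, kron M y⟫ := by
  rw [real_inner_comm (kron M y), inner_kron, inner_kron, Finset.sum_comm]
  refine Finset.sum_congr rfl fun i _ => Finset.sum_congr rfl fun j _ => ?_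
  rw [← hM.apply i j, real_inner_comm]
  rfl

def kronLinearMap (M : Matrix (Fin n) (Fin n) ℝ) : CVec n p →ₗ[ℝ] CVec n p where
  toFun := kron M
  map_add' x y := by
    ext i : 1
    simp [kron, smul_add, Finset.sum_add_distrib]
  map_smul' c x := by
    ext i : 1
    simp [kron, Finset.smul_sum, smul_comm c]

theorem kronLinearMap_isSymmetric {M : Matrix (Fin n) (Fin n) ℝ} (hM : M.IsHermitian) :
    (kronLinearMap (p := p) M).IsSymmetric :=
  inner_kron_comm hM

theorem inner_kron_self_le {M : Matrix (Fin n) (Fin n) ℝ} (hM : M ∈ doublyStochastic ℝ (Fin n))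
    (z : CVec n p) : ⟪kron M z, z⟫ ≤ ‖z‖ ^ 2 := by
  rw [mem_doublyStochastic_iff_sum] at hM
  obtain ⟨hnonneg, hrow, hcol⟩ := hM
  have hamgm : ∀ i j, ⟪z j, z i⟫ ≤ (‖z i‖ ^ 2 + ‖z j‖ ^ 2) / 2 := fun i j => by
    nlinarith [real_inner_le_norm (z j) (z i), two_mul_le_add_sq ‖z i‖ ‖z j‖]
  calc ⟪kron M z, z⟫ = ∑ i, ∑ j, M i j * ⟪z j, z i⟫ := inner_kron M z z
    _ ≤ ∑ i, ∑ j, M i j * ((‖z i‖ ^ 2 + ‖z j‖ ^ 2) / 2) := by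
        gcongr with i _ j _
        exacts [hnonneg i j, hamgm i j]
    _ = (∑ i, ‖z i‖ ^ 2 + ∑ j, ‖z j‖ ^ 2) / 2 := by
        simp only [mul_div, mul_add, Finset.sum_add_distrib, ← Finset.sum_div]
        rw [Finset.sum_comm (f := fun i j => M i j * ‖z j‖ ^ 2)]
        simp only [← Finset.sum_mul, hrow, hcol, one_mul]
    _ = ‖z‖ ^ 2 := by rw [PiLp.norm_sq_eq_of_L2]; ring

def coordSlice (l : Fin p) (z : CVec n p) : EuclideanSpace ℝ (Fin n) :=
  WithLp.toLp 2 (fun i => z i l)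

theorem coordSlice_kron (M : Matrix (Fin n) (Fin n) ℝ) (l : Fin p) (z : CVec n p) :
    coordSlice l (kron M z) = M.toEuclideanLin (coordSlice l z) := by
  ext i
  simp [coordSlice, kron, Matrix.toLpLin_apply, Matrix.mulVec, dotProduct]

theorem inner_eq_sum_inner_coordSlice (x y : CVec n p) :
    ⟪x, y⟫ = ∑ l, ⟪coordSlice l x, coordSlice l y⟫ := by
  simp only [PiLp.inner_apply, coordSlice]
  exact Finset.sum_comm

theorem mul_norm_sq_le_inner_kron_self {M : Matrix (Fin n) (Fin n) ℝ} (hM : M.IsHermitian)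
    {lam : ℝ} (hlam : ∀ i, lam ≤ hM.eigenvalues i) (z : CVec n p) :
    lam * ‖z‖ ^ 2 ≤ ⟪kron M z, z⟫ := by
  rw [← real_inner_self_eq_norm_sq, inner_eq_sum_inner_coordSlice, inner_eq_sum_inner_coordSlice,
    Finset.mul_sum]
  gcongr with l
  rw [coordSlice_kron, real_inner_self_eq_norm_sq]
  exact hM.mul_norm_sq_le_inner_toEuclideanLin hlam _

end Consensus

section Separable

variable {n p : ℕ} {f : Fin n → Vec p → ℝ} {K : Fin n → ℝ≥0} {L : ℝ}

theorem sum_le_add_inner_gradConcat_add (hf : ∀ i, Differentiable ℝ (f i))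
    (hK : ∀ i, LipschitzWith (K i) (gradient (f i))) (hKL : ∀ i, (K i : ℝ) ≤ L) (z d : CVec n p) :
    ∑ i, f i ((z + d) i) ≤ ∑ i, f i (z i) + ⟪gradConcat f z, d⟫ + L / 2 * ‖d‖ ^ 2 := by
  rw [PiLp.inner_apply, PiLp.norm_sq_eq_of_L2, Finset.mul_sum, ← Finset.sum_add_distrib,
    ← Finset.sum_add_distrib]
  gcongr with i
  calc f i (z i + d i) ≤ f i (z i) + ⟪gradient (f i) (z i), d i⟫ + K i / 2 * ‖d i‖ ^ 2 :=
        le_add_inner_gradient_add_half_mul_sq (hf i) (hK i) _ _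
    _ ≤ f i (z i) + ⟪gradient (f i) (z i), d i⟫ + L / 2 * ‖d i‖ ^ 2 := by gcongr; exact hKL i

theorem norm_gradConcat_sq_le (hf : ∀ i, Differentiable ℝ (f i))
    (hK : ∀ i, LipschitzWith (K i) (gradient (f i))) (hK₀ : ∀ i, 0 < K i)
    (hKL : ∀ i, (K i : ℝ) ≤ L) {xs : Fin n → Vec p} (hxs : ∀ i z, f i (xs i) ≤ f i z)
    (z : CVec n p) :
    ‖gradConcat f z‖ ^ 2 ≤ 2 * L * ∑ i, (f i (z i) - f i (xs i)) := by
  rw [PiLp.norm_sq_eq_of_L2, Finset.mul_sum]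
  gcongr with i
  calc ‖gradient (f i) (z i)‖ ^ 2 ≤ 2 * K i * (f i (z i) - f i (xs i)) :=
        norm_gradient_sq_le (hf i) (hK i) (hK₀ i) (hxs i) _
    _ ≤ 2 * L * (f i (z i) - f i (xs i)) := by
        gcongr
        exacts [sub_nonneg.2 (hxs i _), hKL i]

end Separable

theorem dgdt_bounded_gradients_general
    (n p t : ℕ)
    -- local objective functions: convex, differentiable, with Lᵢ-Lipschitz gradients
    (f : Fin n → Vec p → ℝ) (Lc : Fin n → ℝ) (L : ℝ)
    (hdiff : ∀ i, Differentiable ℝ (f i))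
    (hLpos : ∀ i, 0 < Lc i)
    (hLip : ∀ i, LipschitzWith (Real.toNNReal (Lc i)) (fun z => gradient (f i) z))
    (hLmax : IsGreatest (Set.range Lc) L)
    -- each fᵢ attains its minimum at xsᵢ
    (xs : Fin n → Vec p) (hxs : ∀ i, ∀ z, f i (xs i) ≤ f i z)
    -- W is symmetric, doubly stochastic, with eigenvalues in (−1, 1]
    (W : Matrix (Fin n) (Fin n) ℝ)
    (hrow : ∀ i, ∑ j, W i j = 1) (hcol : ∀ j, ∑ i, W i j = 1)
    (hWnn : ∀ i j, 0 ≤ W i j)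
    -- λₙ(Wᵗ): the smallest eigenvalue of Wᵗ
    (hWt : (W ^ t).IsHermitian)
    (lam : ℝ) (hlam : IsLeast (Set.range hWt.eigenvalues) lam)
    -- stepsize condition α ≤ (1 + λₙ(Wᵗ))/L
    (α : ℝ) (hα : 0 < α) (hαle : α ≤ (1 + lam) / L)
    -- DGDᵗ iterates starting from x₀ = 0
    (x : ℕ → CVec n p) (hx0 : x 0 = 0)
    (hiter : ∀ k, x (k + 1) = kron (W ^ t) (x k) - α • gradConcat f (x k))
    -- the gradient bound D
    (D : ℝ) (hD : D = Real.sqrt (2 * L * ∑ i, (f i 0 - f i (xs i)))) :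
    (∀ k, ∑ i, f i (x k i) ≤ ∑ i, f i 0) ∧
    (∀ k, 1 ≤ k → ‖gradConcat f (x k)‖ ≤ D) := by
  obtain ⟨i₀, hi₀⟩ := hLmax.1
  have hL : 0 < L := hi₀ ▸ hLpos i₀
  have hLc : ∀ i, ((Lc i).toNNReal : ℝ) ≤ L := fun i =>
    (Real.coe_toNNReal _ (hLpos i).le).trans_le (hLmax.2 ⟨i, rfl⟩)
  have hWt_ds : W ^ t ∈ doublyStochastic ℝ (Fin n) :=
    pow_mem (mem_doublyStochastic_iff_sum.2 ⟨hWnn, hrow, hcol⟩) t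
  set F : CVec n p → ℝ := fun z => ∑ i, f i (z i)
  set ξ := lyapunov F (kronLinearMap (W ^ t)) α
  have hstep : ∀ k, ξ (x (k + 1)) ≤ ξ (x k) := fun k => hiter k ▸
    lyapunov_step_le (sum_le_add_inner_gradConcat_add hdiff hLip hLc)
      (kronLinearMap_isSymmetric hWt) (mul_norm_sq_le_inner_kron_self hWt fun i => hlam.2 ⟨i, rfl⟩)
      hα ((le_div_iff₀ hL).mp hαle) (x k)
  have hdecrease : ∀ k, F (x k) ≤ F 0 := fun k =>
    calc F (x k) ≤ ξ (x k) := le_lyapunov hα (inner_kron_self_le hWt_ds _)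
      _ ≤ ξ (x 0) := antitone_nat_of_succ_le (f := fun k => ξ (x k)) hstep k.zero_le
      _ = F 0 := by rw [hx0]; exact lyapunov_zero _ _ _
  refine ⟨hdecrease, fun k _ => hD ▸ Real.le_sqrt_of_sq_le ?_⟩
  calc ‖gradConcat f (x k)‖ ^ 2 ≤ 2 * L * ∑ i, (f i (x k i) - f i (xs i)) :=
        norm_gradConcat_sq_le hdiff hLip (fun i => Real.toNNReal_pos.2 (hLpos i)) hLc hxs _
    _ ≤ 2 * L * ∑ i, (f i 0 - f i (xs i)) := by
        gcongr 2 * L * ?_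
        rw [Finset.sum_sub_distrib, Finset.sum_sub_distrib]
        exact sub_le_sub_right (hdecrease k) _

/-- if `α ≤ (1 + λₙ(Wᵗ))/L`, then starting from `x₀ = 0` the DGDᵗ iterates
satisfy `∑ᵢ fᵢ(x_{i,k}) ≤ ∑ᵢ fᵢ(0)` for all `k ≥ 0`, and the concatenated gradient is
bounded: `‖∇f(x_k)‖ ≤ D = √(2L ∑ᵢ (fᵢ(0) − fᵢ*))` for all `k ≥ 1`. -/
theorem dgdt_bounded_gradients
    (n p t : ℕ) (hn : 1 ≤ n) (hp : 1 ≤ p) (ht : 1 ≤ t)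
    -- local objective functions: convex, differentiable, with Lᵢ-Lipschitz gradients
    (f : Fin n → Vec p → ℝ) (Lc : Fin n → ℝ) (L : ℝ)
    (hconv : ∀ i, ConvexOn ℝ Set.univ (f i))
    (hdiff : ∀ i, Differentiable ℝ (f i))
    (hLpos : ∀ i, 0 < Lc i)
    (hLip : ∀ i, LipschitzWith (Real.toNNReal (Lc i)) (fun z => gradient (f i) z))
    (hLmax : IsGreatest (Set.range Lc) L)
    -- each fᵢ attains its minimum at xsᵢ
    (xs : Fin n → Vec p) (hxs : ∀ i, ∀ z, f i (xs i) ≤ f i z)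
    -- W is symmetric, doubly stochastic, with eigenvalues in (−1, 1]
    (W : Matrix (Fin n) (Fin n) ℝ) (hWsymm : W.IsHermitian)
    (hrow : ∀ i, ∑ j, W i j = 1) (hcol : ∀ j, ∑ i, W i j = 1)
    (hWnn : ∀ i j, 0 ≤ W i j)
    (heig : ∀ i, hWsymm.eigenvalues i ∈ Set.Ioc (-1 : ℝ) 1)
    -- λₙ(Wᵗ): the smallest eigenvalue of Wᵗ
    (hWt : (W ^ t).IsHermitian)
    (lam : ℝ) (hlam : IsLeast (Set.range hWt.eigenvalues) lam)
    -- stepsize condition α ≤ (1 + λₙ(Wᵗ))/L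
    (α : ℝ) (hα : 0 < α) (hαle : α ≤ (1 + lam) / L)
    -- DGDᵗ iterates starting from x₀ = 0
    (x : ℕ → CVec n p) (hx0 : x 0 = 0)
    (hiter : ∀ k, x (k + 1) = kron (W ^ t) (x k) - α • gradConcat f (x k))
    -- the gradient bound D
    (D : ℝ) (hD : D = Real.sqrt (2 * L * ∑ i, (f i 0 - f i (xs i)))) :
    (∀ k, ∑ i, f i (x k i) ≤ ∑ i, f i 0) ∧
    (∀ k, 1 ≤ k → ‖gradConcat f (x k)‖ ≤ D) :=
  dgdt_bounded_gradients_general n p t f Lc L hdiff hLpos hLip hLmax xs hxs W hrow hcol hWnn hWt lam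
    hlam α hα hαle x hx0 hiter D hD
end
end

section
/- If α ≤ (1 + λ_n(Wᵗ))/L and x_0 = 0, then ‖∇f(x_k)‖ ≤ D for all k implies that each agent's DGDᵗ iterate deviates boundedly from the mean: ‖x_{i,k} − x̄_k‖ ≤ αD/(1 − βᵗ) for all k ≥ 1 and all i = 1,…,n, where x̄_k = (1/n) Σ_{i=1}^n x_{i,k} and D = √(2L Σ_{i=1}^n (f_i(0) − f_i*)). -/
open Finset Filter

noncomputable section

/-! The deviation `eₖ = xₖ − 1 ⊗ x̄ₖ` obeys `eₖ₊₁ = Zᵗ eₖ − α (∇f(xₖ) − 1 ⊗ mean)`, because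
`Wᵗ` is doubly stochastic. The blocks of `eₖ` sum to zero, so every coordinate column of `eₖ` is
orthogonal to the eigenvector `1` of the simple eigenvalue `1`, and `Wᵗ` contracts it by `βᵗ`.
Centring does not increase the norm, hence `‖eₖ₊₁‖ ≤ βᵗ ‖eₖ‖ + αD`, and from `e₀ = 0` we get
`‖eₖ‖ ≤ αD / (1 − βᵗ)`, which bounds each block of `eₖ`. -/

open scoped RealInnerProductSpace

namespace Matrix.IsHermitian

variable {ι : Type*} [Fintype ι] [DecidableEq ι] {W : Matrix ι ι ℝ}

lemma inner_eigenvectorBasis_toEuclideanLin (hW : W.IsHermitian) (v : EuclideanSpace ℝ ι)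
    (i : ι) : ⟪hW.eigenvectorBasis i, toEuclideanLin W v⟫ =
      hW.eigenvalues i * ⟪hW.eigenvectorBasis i, v⟫ := by
  rw [← isSymmetric_toEuclideanLin_iff.mpr hW, toLpLin_apply, hW.mulVec_eigenvectorBasis]
  exact real_inner_smul_left _ _ _

lemma inner_eigenvectorBasis_eq_zero_of_toEuclideanLin_eq_smul (hW : W.IsHermitian) {μ : ℝ}
    {u : EuclideanSpace ℝ ι} (hu : toEuclideanLin W u = μ • u) {i : ι}
    (hi : hW.eigenvalues i ≠ μ) : ⟪hW.eigenvectorBasis i, u⟫ = 0 := by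
  have h := hW.inner_eigenvectorBasis_toEuclideanLin u i
  rw [hu, real_inner_smul_right] at h
  have : (hW.eigenvalues i - μ) * ⟪hW.eigenvectorBasis i, u⟫ = 0 := by linarith
  exact (mul_eq_zero.mp this).resolve_left (sub_ne_zero.mpr hi)

lemma norm_toEuclideanLin_le_of_inner_eq_zero (hW : W.IsHermitian) {μ : ℝ}
    (hμ : ∃! i, hW.eigenvalues i = μ) {u : EuclideanSpace ℝ ι} (hu0 : u ≠ 0)
    (hu : toEuclideanLin W u = μ • u) {β : ℝ} (hβ0 : 0 ≤ β)
    (hβ : ∀ i, hW.eigenvalues i ≠ μ → |hW.eigenvalues i| ≤ β)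
    {v : EuclideanSpace ℝ ι} (hv : ⟪u, v⟫ = 0) :
    ‖toEuclideanLin W v‖ ≤ β * ‖v‖ := by
  have hdiag := hW.inner_eigenvectorBasis_toEuclideanLin
  set b := hW.eigenvectorBasis
  obtain ⟨i₀, -, huniq⟩ := hμ
  have hu_other : ∀ i ≠ i₀, ⟪b i, u⟫ = 0 := fun i hi =>
    hW.inner_eigenvectorBasis_eq_zero_of_toEuclideanLin_eq_smul hu (fun h => hi (huniq i h))
  have hu_i₀ : ⟪b i₀, u⟫ ≠ 0 := by
    intro h
    apply hu0
    rw [← b.sum_repr' u]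
    exact Finset.sum_eq_zero fun i _ => by
      rcases eq_or_ne i i₀ with rfl | hi
      · rw [h, zero_smul]
      · rw [hu_other i hi, zero_smul]
  have hv_i₀ : ⟪b i₀, v⟫ = 0 := by
    rw [← b.sum_inner_mul_inner, Finset.sum_eq_single i₀ (fun i _ hi => by
      rw [real_inner_comm, hu_other i hi, zero_mul]) (by simp), real_inner_comm] at hv
    exact (mul_eq_zero.mp hv).resolve_left hu_i₀
  have hsq : ‖toEuclideanLin W v‖ ^ 2 ≤ (β * ‖v‖) ^ 2 := by
    rw [← b.sum_sq_norm_inner_right, mul_pow, ← b.sum_sq_norm_inner_right, Finset.mul_sum]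
    refine Finset.sum_le_sum fun i _ => ?_
    rw [hdiag, norm_mul, mul_pow]
    rcases eq_or_ne i i₀ with rfl | hi
    · simp [hv_i₀]
    · gcongr
      exact hβ i fun h => hi (huniq i h)
  exact le_of_sq_le_sq hsq (by positivity)

end Matrix.IsHermitian

lemma le_div_one_sub_of_le_mul_add {u : ℕ → ℝ} {q b : ℝ} (hq0 : 0 ≤ q) (hq1 : q < 1)
    (h0 : u 0 ≤ b / (1 - q)) (hstep : ∀ k, u (k + 1) ≤ q * u k + b) (k : ℕ) :
    u k ≤ b / (1 - q) := by
  induction k with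
  | zero => exact h0
  | succ k ih =>
    calc u (k + 1) ≤ q * (b / (1 - q)) + b := (hstep k).trans (by gcongr)
      _ = b / (1 - q) := by field_simp [(sub_pos.mpr hq1).ne']; ring

namespace Matrix

variable {ι : Type*} [Fintype ι] [DecidableEq ι] {A : Matrix ι ι ℝ}

lemma sum_pow_apply_right_eq_one (hrow : ∀ i, ∑ j, A i j = 1) (t : ℕ) (i : ι) :
    ∑ j, (A ^ t) i j = 1 := by
  have hfix : ∀ B : Matrix ι ι ℝ, (∀ i, ∑ j, B i j = 1) ↔ B *ᵥ 1 = 1 := fun B => by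
    simp [funext_iff, mulVec, dotProduct]
  refine (hfix _).mpr ?_ i
  induction t with
  | zero => simp
  | succ t ih => rw [pow_succ, ← mulVec_mulVec, (hfix A).mp hrow, ih]

lemma sum_pow_apply_left_eq_one (hcol : ∀ j, ∑ i, A i j = 1) (t : ℕ) (j : ι) :
    ∑ i, (A ^ t) i j = 1 := by
  simpa [← transpose_pow] using sum_pow_apply_right_eq_one (A := Aᵀ) hcol t j

end Matrix

section Blocks

variable {n p : ℕ}

/-- Column `c` of `x` viewed as an `n × p` matrix whose rows are the blocks. -/
def column (x : CVec n p) (c : Fin p) : EuclideanSpace ℝ (Fin n) :=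
  WithLp.toLp 2 fun i => x i c

lemma norm_sq_eq_sum_norm_sq_column (x : CVec n p) : ‖x‖ ^ 2 = ∑ c, ‖column x c‖ ^ 2 := by
  simp only [PiLp.norm_sq_eq_of_L2, column]
  exact Finset.sum_comm

lemma column_kron (W : Matrix (Fin n) (Fin n) ℝ) (x : CVec n p) (c : Fin p) :
    column (kron W x) c = Matrix.toEuclideanLin W (column x c) := by
  ext i
  simp [column, kron, Matrix.toLpLin_apply, Matrix.mulVec, dotProduct]

lemma kron_one (x : CVec n p) : kron 1 x = x := by
  ext i : 1
  simp [kron, Matrix.one_apply, ite_smul]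

lemma kron_mul (A B : Matrix (Fin n) (Fin n) ℝ) (x : CVec n p) :
    kron (A * B) x = kron A (kron B x) := by
  ext i : 1
  simp only [kron, Matrix.mul_apply, Finset.sum_smul, Finset.smul_sum, smul_smul]
  exact Finset.sum_comm

lemma sum_kron {W : Matrix (Fin n) (Fin n) ℝ} (hcol : ∀ j, ∑ i, W i j = 1) (x : CVec n p) :
    ∑ i, kron W x i = ∑ i, x i := by
  simp only [kron, PiLp.toLp_apply]
  rw [Finset.sum_comm]
  simp [← Finset.sum_smul, hcol]

lemma norm_kron_le {W : Matrix (Fin n) (Fin n) ℝ} (hW : W.IsHermitian)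
    (hrow : ∀ i, ∑ j, W i j = 1) (hone : ∃! i, hW.eigenvalues i = 1) {β : ℝ} (hβ0 : 0 ≤ β)
    (hβ : ∀ i, hW.eigenvalues i ≠ 1 → |hW.eigenvalues i| ≤ β) {x : CVec n p}
    (hx : ∑ i, x i = 0) : ‖kron W x‖ ≤ β * ‖x‖ := by
  set ones : EuclideanSpace ℝ (Fin n) := WithLp.toLp 2 fun _ => 1
  have hones0 : ones ≠ 0 := fun h => by
    obtain ⟨i, -⟩ := hone
    simpa [ones] using congr_fun (congr_arg WithLp.ofLp h) i
  have hWones : Matrix.toEuclideanLin W ones = ones := by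
    ext i
    simp [ones, Matrix.toLpLin_apply, Matrix.mulVec, dotProduct, hrow]
  have hcolumn : ∀ c, ‖Matrix.toEuclideanLin W (column x c)‖ ≤ β * ‖column x c‖ := fun c =>
    hW.norm_toEuclideanLin_le_of_inner_eq_zero hone hones0 (by rw [hWones, one_smul]) hβ0 hβ <| by
      have := congr_arg (· c) hx
      simpa [ones, column, PiLp.inner_apply, WithLp.ofLp_sum] using this
  have hsq : ‖kron W x‖ ^ 2 ≤ (β * ‖x‖) ^ 2 := by
    rw [norm_sq_eq_sum_norm_sq_column, mul_pow, norm_sq_eq_sum_norm_sq_column, Finset.mul_sum]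
    gcongr with c
    rw [column_kron, ← mul_pow]
    exact pow_le_pow_left₀ (norm_nonneg _) (hcolumn c) 2
  exact le_of_sq_le_sq hsq (by positivity)

lemma norm_kron_pow_le {W : Matrix (Fin n) (Fin n) ℝ} (hW : W.IsHermitian)
    (hrow : ∀ i, ∑ j, W i j = 1) (hcol : ∀ j, ∑ i, W i j = 1)
    (hone : ∃! i, hW.eigenvalues i = 1) {β : ℝ} (hβ0 : 0 ≤ β)
    (hβ : ∀ i, hW.eigenvalues i ≠ 1 → |hW.eigenvalues i| ≤ β) (t : ℕ) {x : CVec n p}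
    (hx : ∑ i, x i = 0) : ‖kron (W ^ t) x‖ ≤ β ^ t * ‖x‖ := by
  induction t generalizing x with
  | zero => simp [kron_one]
  | succ t ih =>
    rw [pow_succ, kron_mul]
    calc ‖kron (W ^ t) (kron W x)‖ ≤ β ^ t * ‖kron W x‖ := ih (by rw [sum_kron hcol, hx])
      _ ≤ β ^ t * (β * ‖x‖) := by gcongr; exact norm_kron_le hW hrow hone hβ0 hβ hx
      _ = β ^ (t + 1) * ‖x‖ := by ring

def blockMean (x : CVec n p) : Vec p := (n : ℝ)⁻¹ • ∑ i, x i

def deviation : CVec n p →ₗ[ℝ] CVec n p where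
  toFun x := WithLp.toLp 2 fun i => x i - blockMean x
  map_add' x y := by
    ext i : 1
    simp only [PiLp.add_apply, blockMean, Finset.sum_add_distrib, smul_add]
    abel
  map_smul' a x := by
    ext i : 1
    simp [blockMean, ← Finset.smul_sum, smul_sub, smul_comm a]

lemma deviation_apply (x : CVec n p) (i : Fin n) : deviation x i = x i - blockMean x := rfl

lemma sum_deviation (x : CVec n p) : ∑ i, deviation x i = 0 := by
  rcases eq_or_ne n 0 with rfl | hn
  · simp
  · simp [deviation_apply, blockMean, Finset.sum_sub_distrib, ← Nat.cast_smul_eq_nsmul ℝ,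
      smul_smul, hn]

lemma norm_deviation_le (x : CVec n p) : ‖deviation x‖ ≤ ‖x‖ := by
  set m : CVec n p := WithLp.toLp 2 fun _ => blockMean x
  have hx : x = deviation x + m := by ext i : 1; simp [m, deviation_apply]
  have horth : ⟪deviation x, m⟫ = 0 := by
    rw [PiLp.inner_apply]
    change ∑ i, ⟪deviation x i, blockMean x⟫ = 0
    rw [← sum_inner, sum_deviation, inner_zero_left]
  have hsq : ‖x‖ ^ 2 = ‖deviation x‖ ^ 2 + ‖m‖ ^ 2 := by
    conv_lhs => rw [hx, norm_add_sq_real, horth]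
    ring
  exact le_of_sq_le_sq (by rw [hsq]; exact le_add_of_nonneg_right (sq_nonneg _)) (norm_nonneg _)

lemma deviation_kron {A : Matrix (Fin n) (Fin n) ℝ} (hrow : ∀ i, ∑ j, A i j = 1)
    (hcol : ∀ j, ∑ i, A i j = 1) (x : CVec n p) :
    deviation (kron A x) = kron A (deviation x) := by
  ext i : 1
  rw [deviation_apply, blockMean, sum_kron hcol]
  simp [deviation_apply, blockMean, kron, smul_sub, Finset.sum_sub_distrib,
    ← Finset.sum_smul, hrow]

end Blocks

theorem dgdt_bounded_deviation_from_mean_general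
    (n p t : ℕ) (ht : 1 ≤ t)
    -- local objective functions: convex, differentiable, with Lᵢ-Lipschitz gradients
    (f : Fin n → Vec p → ℝ)
    -- W is symmetric, doubly stochastic, with eigenvalues in (−1, 1],
    -- exactly one eigenvalue equal to 1
    (W : Matrix (Fin n) (Fin n) ℝ) (hWsymm : W.IsHermitian)
    (hrow : ∀ i, ∑ j, W i j = 1) (hcol : ∀ j, ∑ i, W i j = 1)
    (hone : ∃! i, hWsymm.eigenvalues i = 1)
    -- β ∈ (0,1): the second largest magnitude of the eigenvalues of W
    (β : ℝ) (hβmem : β ∈ Set.Ioo (0 : ℝ) 1)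
    (hβ : IsGreatest {r : ℝ | ∃ i, hWsymm.eigenvalues i ≠ 1 ∧ r = |hWsymm.eigenvalues i|} β)
    (α : ℝ) (hα : 0 < α)
    -- DGDᵗ iterates starting from x₀ = 0
    (x : ℕ → CVec n p) (hx0 : x 0 = 0)
    (hiter : ∀ k, x (k + 1) = kron (W ^ t) (x k) - α • gradConcat f (x k))
    -- the gradient bound D and its validity
    (D : ℝ)
    (hDgrad : ∀ k, ‖gradConcat f (x k)‖ ≤ D)
    -- the mean iterate
    (xbar : ℕ → Vec p) (hxbar : ∀ k, xbar k = (n : ℝ)⁻¹ • ∑ i, x k i) :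
    ∀ k, 1 ≤ k → ∀ i, ‖x k i - xbar k‖ ≤ α * D / (1 - β ^ t) := by
  intro k _ i
  have hβ0 : 0 ≤ β := hβmem.1.le
  have hβt : β ^ t < 1 := pow_lt_one₀ hβ0 hβmem.2 (by omega)
  have hD0 : 0 ≤ D := (norm_nonneg _).trans (hDgrad 0)
  have hstep : ∀ k, ‖deviation (x (k + 1))‖ ≤ β ^ t * ‖deviation (x k)‖ + α * D := fun k => by
    rw [hiter, map_sub, map_smul, deviation_kron (W.sum_pow_apply_right_eq_one hrow t)
      (W.sum_pow_apply_left_eq_one hcol t)]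
    refine (norm_sub_le _ _).trans (add_le_add ?_ ?_)
    · exact norm_kron_pow_le hWsymm hrow hcol hone hβ0 (fun j hj => hβ.2 ⟨j, hj, rfl⟩) t
        (sum_deviation _)
    · rw [norm_smul, Real.norm_of_nonneg hα.le]
      gcongr
      exact (norm_deviation_le _).trans (hDgrad k)
  calc ‖x k i - xbar k‖ = ‖deviation (x k) i‖ := by rw [hxbar, deviation_apply, blockMean]
    _ ≤ ‖deviation (x k)‖ := PiLp.norm_apply_le _ _
    _ ≤ α * D / (1 - β ^ t) :=
      le_div_one_sub_of_le_mul_add (u := fun k => ‖deviation (x k)‖) (pow_nonneg hβ0 t) hβt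
        (by simp only [hx0, map_zero, norm_zero]; positivity) hstep k

/-- if `α ≤ (1 + λₙ(Wᵗ))/L` and `x₀ = 0`, then `‖∇f(x_k)‖ ≤ D` for all `k`
implies that each agent's DGDᵗ iterate deviates boundedly from the mean:
`‖x_{i,k} − x̄_k‖ ≤ αD/(1 − βᵗ)` for all `k ≥ 1` and all `i`. -/
theorem dgdt_bounded_deviation_from_mean
    (n p t : ℕ) (hn : 1 ≤ n) (hp : 1 ≤ p) (ht : 1 ≤ t)
    -- local objective functions: convex, differentiable, with Lᵢ-Lipschitz gradients
    (f : Fin n → Vec p → ℝ) (Lc : Fin n → ℝ) (L : ℝ)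
    (hconv : ∀ i, ConvexOn ℝ Set.univ (f i))
    (hdiff : ∀ i, Differentiable ℝ (f i))
    (hLpos : ∀ i, 0 < Lc i)
    (hLip : ∀ i, LipschitzWith (Real.toNNReal (Lc i)) (fun z => gradient (f i) z))
    (hLmax : IsGreatest (Set.range Lc) L)
    -- each fᵢ attains its minimum at xsᵢ
    (xs : Fin n → Vec p) (hxs : ∀ i, ∀ z, f i (xs i) ≤ f i z)
    -- W is symmetric, doubly stochastic, with eigenvalues in (−1, 1],
    -- exactly one eigenvalue equal to 1
    (W : Matrix (Fin n) (Fin n) ℝ) (hWsymm : W.IsHermitian)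
    (hrow : ∀ i, ∑ j, W i j = 1) (hcol : ∀ j, ∑ i, W i j = 1)
    (hWnn : ∀ i j, 0 ≤ W i j)
    (heig : ∀ i, hWsymm.eigenvalues i ∈ Set.Ioc (-1 : ℝ) 1)
    (hone : ∃! i, hWsymm.eigenvalues i = 1)
    -- β ∈ (0,1): the second largest magnitude of the eigenvalues of W
    (β : ℝ) (hβmem : β ∈ Set.Ioo (0 : ℝ) 1)
    (hβ : IsGreatest {r : ℝ | ∃ i, hWsymm.eigenvalues i ≠ 1 ∧ r = |hWsymm.eigenvalues i|} β)
    -- λₙ(Wᵗ): the smallest eigenvalue of Wᵗ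
    (hWt : (W ^ t).IsHermitian)
    (lam : ℝ) (hlam : IsLeast (Set.range hWt.eigenvalues) lam)
    -- stepsize condition α ≤ (1 + λₙ(Wᵗ))/L
    (α : ℝ) (hα : 0 < α) (hαle : α ≤ (1 + lam) / L)
    -- DGDᵗ iterates starting from x₀ = 0
    (x : ℕ → CVec n p) (hx0 : x 0 = 0)
    (hiter : ∀ k, x (k + 1) = kron (W ^ t) (x k) - α • gradConcat f (x k))
    -- the gradient bound D and its validity
    (D : ℝ) (hD : D = Real.sqrt (2 * L * ∑ i, (f i 0 - f i (xs i))))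
    (hDgrad : ∀ k, ‖gradConcat f (x k)‖ ≤ D)
    -- the mean iterate
    (xbar : ℕ → Vec p) (hxbar : ∀ k, xbar k = (n : ℝ)⁻¹ • ∑ i, x k i) :
    ∀ k, 1 ≤ k → ∀ i, ‖x k i - xbar k‖ ≤ α * D / (1 - β ^ t) :=
  dgdt_bounded_deviation_from_mean_general n p t ht f W hWsymm hrow hcol hone β hβmem hβ α hα x hx0
    hiter D hDgrad xbar hxbar
end
end

section
/- (Bounded deviation for the y-iterates of NEAR-DGDᵗ) Suppose 0 < α < 1/L and y_{i,0} = s_0 for all i. Then for all k ≥ 1 and all i: ‖y_{i,k} − ȳ_k‖ ≤ βᵗ D + 2D, where ȳ_k = (1/n)Σ_i y_{i,k} and D = ‖y_0 − u*‖ + ((ν + 4)/ν)‖u*‖ with u* the concatenation of the minimizers u_i* of the f_i, ν = 2αγ, γ = min_i μ_i L_i/(μ_i + L_i). -/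
open Finset Filter

noncomputable section

/-! Each local gradient step `z ↦ z - α ∇fᵢ z` contracts towards the minimizer `uᵢ*` by the
factor `√(1 - ν)`. This rests on the interpolation inequality
`‖∇f z - ∇f w‖² + μL ‖z - w‖² ≤ (μ + L) ⟪∇f z - ∇f w, z - w⟫`, which is the cocoercivity of the
gradient of the convex, `(L - μ)`-smooth function `f - μ/2 ‖·‖²`. The doubly stochastic matrix
`Wᵗ` acts nonexpansively and moves `u*` by at most `2‖u*‖`, so
`‖y_{k+1} - u*‖ ≤ √(1 - ν) (‖y_k - u*‖ + 2‖u*‖)`, and this recursion keeps `‖y_k - u*‖` below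
`‖y₀ - u*‖ + 4‖u*‖/ν`. Hence every block `y_{i,k}` and the mean `ȳ_k` have norm at most `D`, so
they are at distance at most `2D`. -/

section GradientInequalities

open AffineMap
open scoped NNReal RealInnerProductSpace

variable {E : Type*} [NormedAddCommGroup E] [InnerProductSpace ℝ E]

lemma norm_sq_eq_norm_sq_add_inner_add_norm_sub_sq (z w : E) :
    ‖w‖ ^ 2 = ‖z‖ ^ 2 + 2 * ⟪z, w - z⟫ + ‖w - z‖ ^ 2 := by
  rw [← norm_add_sq_real, add_sub_cancel]

lemma norm_sub_sq_le_mul_inner_of_quadratic_bounds {g : E → ℝ} {G : E → E} {K : ℝ} (hK : 0 < K)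
    (hlow : ∀ z w, g z + ⟪G z, w - z⟫ ≤ g w)
    (hup : ∀ z w, g w ≤ g z + ⟪G z, w - z⟫ + K / 2 * ‖w - z‖ ^ 2) (z w : E) :
    ‖G z - G w‖ ^ 2 ≤ K * ⟪G z - G w, z - w⟫ := by
  -- the lower bound at `z` and the upper bound at `w`, both evaluated at `w - (G w - G z) / K`
  have half (z w : E) : g z + ⟪G z, w - z⟫ + ‖G w - G z‖ ^ 2 / (2 * K) ≤ g w := by
    set D := G w - G z
    have h₁ := hlow z (w - K⁻¹ • D)
    have h₂ := hup w (w - K⁻¹ • D)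
    rw [sub_right_comm, inner_sub_right, real_inner_smul_right] at h₁
    rw [sub_sub_cancel_left, inner_neg_right, norm_neg, real_inner_smul_right, norm_smul,
      Real.norm_of_nonneg (inv_nonneg.2 hK.le)] at h₂
    have hD : ⟪G w, D⟫ - ⟪G z, D⟫ = ‖D‖ ^ 2 := by
      rw [← inner_sub_left, real_inner_self_eq_norm_sq]
    have hK' : K / 2 * (K⁻¹ * ‖D‖) ^ 2 = K⁻¹ * ‖D‖ ^ 2 - ‖D‖ ^ 2 / (2 * K) := by
      field_simp
      ring
    linear_combination h₁ + h₂ - K⁻¹ * hD + hK'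
  have h₁ := half z w
  have h₂ := half w z
  rw [norm_sub_rev, ← neg_sub z w, inner_neg_right] at h₁
  have : ‖G z - G w‖ ^ 2 / K ≤ ⟪G z - G w, z - w⟫ := by
    rw [inner_sub_left]
    have : ‖G z - G w‖ ^ 2 / (2 * K) * 2 = ‖G z - G w‖ ^ 2 / K := by field_simp
    linarith
  rwa [div_le_iff₀' hK] at this

variable [CompleteSpace E] {f : E → ℝ} {f' : E} {z w : E}

lemma HasGradientAt.hasDerivAt_comp_lineMap {s : ℝ}
    (h : HasGradientAt f f' (lineMap z w s)) :
    HasDerivAt (fun t : ℝ => f (lineMap z w t)) ⟪f', w - z⟫ s :=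
  (hasGradientAt_iff_hasFDerivAt.1 h).comp_hasDerivAt s hasDerivAt_lineMap

lemma ConvexOn.add_inner_le_of_hasGradientAt (hf : ConvexOn ℝ Set.univ f)
    (h : HasGradientAt f f' z) (w : E) : f z + ⟪f', w - z⟫ ≤ f w := by
  have hφ : ConvexOn ℝ Set.univ (fun t : ℝ => f (lineMap z w t)) :=
    hf.comp_affineMap (lineMap z w)
  have := hφ.le_slope_of_hasDerivAt (Set.mem_univ 0) (Set.mem_univ 1) one_pos
    (HasGradientAt.hasDerivAt_comp_lineMap (by simpa using h))
  rw [slope_def_field] at this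
  simp only [lineMap_apply_zero, lineMap_apply_one, sub_zero, div_one] at this
  linarith

lemma LipschitzWith.le_add_inner_gradient_add_sq {K : ℝ≥0} (hf : Differentiable ℝ f)
    (hK : LipschitzWith K (gradient f)) (z w : E) :
    f w ≤ f z + ⟪gradient f z, w - z⟫ + K / 2 * ‖w - z‖ ^ 2 := by
  set ψ : ℝ → ℝ := fun s =>
    f (lineMap z w s) - s * ⟪gradient f z, w - z⟫ - K / 2 * s ^ 2 * ‖w - z‖ ^ 2
  have hψ' (s : ℝ) : HasDerivAt ψ
      (⟪gradient f (lineMap z w s) - gradient f z, w - z⟫ - K * s * ‖w - z‖ ^ 2) s := by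
    have hline : HasDerivAt (fun t => f (lineMap z w t)) ⟪gradient f (lineMap z w s), w - z⟫ s :=
      (hf _).hasGradientAt.hasDerivAt_comp_lineMap
    refine ((hline.sub ((hasDerivAt_id s).mul_const _)).sub
      (((hasDerivAt_pow 2 s).const_mul (K / 2 : ℝ)).mul_const (‖w - z‖ ^ 2))).congr_deriv ?_
    rw [inner_sub_left]
    ring
  have hanti : AntitoneOn ψ (Set.Ici 0) := by
    refine antitoneOn_of_hasDerivWithinAt_nonpos (convex_Ici 0)
      (fun s _ => (hψ' s).continuousAt.continuousWithinAt)
      (fun s _ => (hψ' s).hasDerivWithinAt) fun s hs => ?_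
    rw [interior_Ici] at hs
    have hdist : ‖gradient f (lineMap z w s) - gradient f z‖ ≤ K * (s * ‖w - z‖) := by
      have := hK.dist_le_mul (lineMap z w s) z
      rwa [dist_lineMap_left, dist_comm z w, Real.norm_of_nonneg (le_of_lt hs), dist_eq_norm,
        dist_eq_norm] at this
    have := (real_inner_le_norm _ (w - z)).trans
      (mul_le_mul_of_nonneg_right hdist (norm_nonneg (w - z)))
    nlinarith
  have := hanti (Set.mem_Ici.2 le_rfl) (Set.mem_Ici.2 zero_le_one) zero_le_one
  simp only [ψ, lineMap_apply_zero, lineMap_apply_one] at this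
  linarith

lemma HasGradientAt.sub_half_mul_norm_sq (h : HasGradientAt f f' z) (m : ℝ) :
    HasGradientAt (fun v => f v - m / 2 * ‖v‖ ^ 2) (f' - m • z) z := by
  rw [hasGradientAt_iff_hasFDerivAt] at h ⊢
  refine (h.fun_sub ((hasStrictFDerivAt_norm_sq z).hasFDerivAt.const_mul (m / 2))).congr_fderiv ?_
  ext v
  simp only [sub_apply, InnerProductSpace.toDual_apply_apply, smul_apply, coe_innerSL_apply,
    nsmul_eq_mul, Nat.cast_ofNat, smul_eq_mul, map_sub, map_smul, sub_right_inj]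
  ring

lemma StrongConvexOn.add_inner_add_sq_le {m : ℝ} (hf : StrongConvexOn Set.univ m f)
    (h : HasGradientAt f f' z) (w : E) : f z + ⟪f', w - z⟫ + m / 2 * ‖w - z‖ ^ 2 ≤ f w := by
  have := (strongConvexOn_iff_convex.1 hf).add_inner_le_of_hasGradientAt
    (h.sub_half_mul_norm_sq m) w
  rw [inner_sub_left, real_inner_smul_left] at this
  linear_combination this - m / 2 * norm_sq_eq_norm_sq_add_inner_add_norm_sub_sq z w

lemma StrongConvexOn.mul_norm_sq_le_inner_gradient {m : ℝ} (hf : StrongConvexOn Set.univ m f)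
    (hd : Differentiable ℝ f) (z w : E) :
    m * ‖z - w‖ ^ 2 ≤ ⟪gradient f z - gradient f w, z - w⟫ := by
  have h₁ := hf.add_inner_add_sq_le (hd z).hasGradientAt w
  have h₂ := hf.add_inner_add_sq_le (hd w).hasGradientAt z
  rw [← neg_sub z w, inner_neg_right, norm_neg] at h₁
  rw [inner_sub_left]
  linarith

lemma StrongConvexOn.le_of_lipschitzWith_gradient [Nontrivial E] {m : ℝ} {L : ℝ≥0}
    (hf : StrongConvexOn Set.univ m f) (hd : Differentiable ℝ f)
    (hL : LipschitzWith L (gradient f)) : m ≤ L := by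
  obtain ⟨z, hz⟩ := exists_ne (0 : E)
  have hmono := hf.mul_norm_sq_le_inner_gradient hd z 0
  have hlip := hL.norm_sub_le z 0
  have := (real_inner_le_norm _ _).trans (mul_le_mul_of_nonneg_right hlip (norm_nonneg (z - 0)))
  rw [sub_zero] at hmono hlip this
  have hz' : 0 < ‖z‖ ^ 2 := by positivity
  nlinarith

lemma StrongConvexOn.norm_gradient_sub_sq_add_le {m : ℝ} {L : ℝ≥0}
    (hf : StrongConvexOn Set.univ m f) (hd : Differentiable ℝ f) (hL : LipschitzWith L (gradient f))
    (hmL : m ≤ L) (z w : E) :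
    ‖gradient f z - gradient f w‖ ^ 2 + m * L * ‖z - w‖ ^ 2
      ≤ (m + L) * ⟪gradient f z - gradient f w, z - w⟫ := by
  rcases hmL.lt_or_eq with hlt | rfl
  · -- `f - m/2 ‖·‖²` is convex and `(L - m)`-smooth, hence its gradient is cocoercive
    have hcoco := norm_sub_sq_le_mul_inner_of_quadratic_bounds (sub_pos.2 hlt)
      (g := fun v => f v - m / 2 * ‖v‖ ^ 2) (G := fun v => gradient f v - m • v)
      (fun z w => (strongConvexOn_iff_convex.1 hf).add_inner_le_of_hasGradientAt
        ((hd z).hasGradientAt.sub_half_mul_norm_sq m) w)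
      (fun z w => by
        rw [inner_sub_left, real_inner_smul_left]
        linear_combination hL.le_add_inner_gradient_add_sq hd z w
          - m / 2 * norm_sq_eq_norm_sq_add_inner_add_norm_sub_sq z w) z w
    rw [sub_sub_sub_comm, ← smul_sub] at hcoco
    set Δ := gradient f z - gradient f w
    clear_value Δ
    have hnorm : ‖Δ - m • (z - w)‖ ^ 2 = ‖Δ‖ ^ 2 - 2 * m * ⟪Δ, z - w⟫ + m ^ 2 * ‖z - w‖ ^ 2 := by
      rw [norm_sub_sq_real, norm_smul, real_inner_smul_right, Real.norm_eq_abs, mul_pow, sq_abs]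
      ring
    rw [hnorm, inner_sub_left, real_inner_smul_left, real_inner_self_eq_norm_sq] at hcoco
    linear_combination hcoco
  · have hmono := hf.mul_norm_sq_le_inner_gradient hd z w
    have hlip := hL.norm_sub_le z w
    have := (real_inner_le_norm _ _).trans (mul_le_mul_of_nonneg_right hlip (norm_nonneg (z - w)))
    have hm : (0 : ℝ) ≤ L := L.2
    nlinarith [norm_nonneg (gradient f z - gradient f w), norm_nonneg (z - w)]

lemma StrongConvexOn.norm_sub_smul_gradient_sub_sq_le {m α : ℝ} {L : ℝ≥0} {u : E}
    (hf : StrongConvexOn Set.univ m f) (hd : Differentiable ℝ f) (hL : LipschitzWith L (gradient f))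
    (hm : 0 < m) (hmL : m ≤ L) (hu : gradient f u = 0) (hα : 0 ≤ α) (hαmL : α * (m + L) ≤ 2)
    (z : E) :
    ‖z - α • gradient f z - u‖ ^ 2 ≤ (1 - 2 * α * (m * L / (m + L))) * ‖z - u‖ ^ 2 := by
  have hmL0 : 0 < m + L := by positivity
  have key := hf.norm_gradient_sub_sq_add_le hd hL hmL z u
  rw [hu, sub_zero] at key
  have hslack : 0 ≤ α * (2 - α * (m + L)) * ‖gradient f z‖ ^ 2 := by
    have := sub_nonneg.2 hαmL
    positivity
  rw [sub_right_comm, norm_sub_sq_real, real_inner_smul_right, norm_smul, Real.norm_eq_abs,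
    mul_pow, sq_abs, real_inner_comm, ← mul_le_mul_iff_right₀ hmL0]
  have hcoef : (m + L) * (2 * α * (m * L / (m + L))) = 2 * α * (m * L) := by field_simp
  linear_combination (2 * α) * key + hslack + ‖z - u‖ ^ 2 * hcoef

end GradientInequalities

section

variable {n p : ℕ}

lemma kron_sub (M : Matrix (Fin n) (Fin n) ℝ) (a b : CVec n p) :
    kron M (a - b) = kron M a - kron M b := by
  ext i : 1
  simp [kron, smul_sub, Finset.sum_sub_distrib]

lemma norm_kron_le_s12 {M : Matrix (Fin n) (Fin n) ℝ} (hM : M ∈ doublyStochastic ℝ (Fin n))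
    (v : CVec n p) : ‖kron M v‖ ≤ ‖v‖ := by
  have hsq : ConvexOn ℝ Set.univ (fun x : Vec p => ‖x‖ ^ 2) :=
    convexOn_univ_norm.pow (fun _ _ => norm_nonneg _) 2
  rw [← pow_le_pow_iff_left₀ (norm_nonneg _) (norm_nonneg _) two_ne_zero,
    PiLp.norm_sq_eq_of_L2, PiLp.norm_sq_eq_of_L2]
  calc ∑ i, ‖∑ j, M i j • v j‖ ^ 2 ≤ ∑ i, ∑ j, M i j * ‖v j‖ ^ 2 := by
        gcongr with i
        exact hsq.map_sum_le (fun j _ => nonneg_of_mem_doublyStochastic hM)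
          (sum_row_of_mem_doublyStochastic hM i) (fun _ _ => Set.mem_univ _)
    _ = ∑ j, ‖v j‖ ^ 2 := by
        rw [Finset.sum_comm]
        simp [← Finset.sum_mul, sum_col_of_mem_doublyStochastic hM]

lemma norm_kron_sub_le {M : Matrix (Fin n) (Fin n) ℝ} (hM : M ∈ doublyStochastic ℝ (Fin n))
    (v u : CVec n p) : ‖kron M v - u‖ ≤ ‖v - u‖ + 2 * ‖u‖ := by
  calc ‖kron M v - u‖ = ‖kron M (v - u) + (kron M u - u)‖ := by rw [kron_sub]; abel_nf
    _ ≤ ‖v - u‖ + (‖u‖ + ‖u‖) :=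
        norm_add_le_of_le (norm_kron_le_s12 hM _) ((norm_sub_le _ _).trans
          (add_le_add_left (norm_kron_le_s12 hM u) _))
    _ = ‖v - u‖ + 2 * ‖u‖ := by ring

lemma norm_sub_smul_gradConcat_sub_sq_le {f : Fin n → Vec p → ℝ} {u : CVec n p} {α c : ℝ}
    (h : ∀ i z, ‖z - α • gradient (f i) z - u i‖ ^ 2 ≤ c * ‖z - u i‖ ^ 2) (x : CVec n p) :
    ‖x - α • gradConcat f x - u‖ ^ 2 ≤ c * ‖x - u‖ ^ 2 := by
  rw [PiLp.norm_sq_eq_of_L2, PiLp.norm_sq_eq_of_L2, Finset.mul_sum]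
  exact Finset.sum_le_sum fun i _ => h i (x i)

lemma le_add_div_mul_of_sq_le {r : ℕ → ℝ} {ν U : ℝ} (hν : 0 < ν) (hν1 : ν ≤ 1) (hU : 0 ≤ U)
    (hr : ∀ k, 0 ≤ r k) (h : ∀ k, r (k + 1) ^ 2 ≤ (1 - ν) * (r k + 2 * U) ^ 2) (k : ℕ) :
    r k ≤ r 0 + 4 / ν * U := by
  set M := r 0 + 4 / ν * U
  have hU' : 0 ≤ 4 / ν * U := mul_nonneg (div_nonneg zero_le_four hν.le) hU
  have hM0 : 0 ≤ M := add_nonneg (hr 0) hU'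
  have hM : 4 * U ≤ ν * M := by
    have : ν * (4 / ν * U) = 4 * U := by field_simp
    nlinarith [hr 0]
  induction k with
  | zero => exact le_add_of_nonneg_right hU'
  | succ k ih =>
    -- `1 - ν ≤ (1 - ν/2)²`, and `(1 - ν/2) (M + 2U) ≤ M` because `4U ≤ νM`
    rw [← pow_le_pow_iff_left₀ (hr _) hM0 two_ne_zero]
    calc r (k + 1) ^ 2 ≤ (1 - ν) * (M + 2 * U) ^ 2 := by
          refine (h k).trans (mul_le_mul_of_nonneg_left ?_ (by linarith))
          gcongr
          exact add_nonneg (hr k) (by positivity)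
      _ ≤ ((1 - ν / 2) * (M + 2 * U)) ^ 2 := by
          rw [mul_pow]
          gcongr
          nlinarith
      _ ≤ M ^ 2 := by
          gcongr
          · nlinarith
          · nlinarith

lemma mul_div_add_le_half {a b : ℝ} (ha : 0 < a) (hab : a ≤ b) : a * b / (a + b) ≤ b / 2 := by
  rw [div_le_div_iff₀ (by linarith) two_pos]
  nlinarith

lemma norm_sub_le_of_sq_contraction {M : Matrix (Fin n) (Fin n) ℝ}
    (hM : M ∈ doublyStochastic ℝ (Fin n)) {T : CVec n p → CVec n p} {u : CVec n p} {ν : ℝ}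
    (hν : 0 < ν) (hν1 : ν ≤ 1) (hT : ∀ x, ‖T x - u‖ ^ 2 ≤ (1 - ν) * ‖x - u‖ ^ 2)
    {y : ℕ → CVec n p} (hy : ∀ k, y (k + 1) = T (kron M (y k))) (k : ℕ) :
    ‖y k - u‖ ≤ ‖y 0 - u‖ + 4 / ν * ‖u‖ :=
  le_add_div_mul_of_sq_le (r := fun k => ‖y k - u‖) hν hν1 (norm_nonneg u)
    (fun _ => norm_nonneg _) (fun k => by
      rw [hy]
      exact (hT _).trans (mul_le_mul_of_nonneg_left
        (pow_le_pow_left₀ (norm_nonneg _) (norm_kron_sub_le hM _ _) 2) (by linarith))) k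

lemma norm_sub_inv_card_smul_sum_le {E : Type*} [SeminormedAddCommGroup E] [NormedSpace ℝ E]
    {v : Fin n → E} {B : ℝ} (hv : ∀ j, ‖v j‖ ≤ B) (i : Fin n) :
    ‖v i - (n : ℝ)⁻¹ • ∑ j, v j‖ ≤ 2 * B := by
  have hn : (0 : ℝ) < n := by exact_mod_cast i.pos
  have hmean : ‖(n : ℝ)⁻¹ • ∑ j, v j‖ ≤ B := by
    rw [norm_smul, Real.norm_of_nonneg (by positivity), inv_mul_le_iff₀ hn]
    simpa using norm_sum_le_of_le Finset.univ fun j _ => hv j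
  linarith [norm_sub_le_of_le (hv i) hmean]

end

theorem near_dgdt_bounded_deviation_y_iterates_general
    (n p t : ℕ) (hp : 1 ≤ p)
    -- local objective functions: μᵢ-strongly convex, differentiable,
    -- with Lᵢ-Lipschitz gradients
    (f : Fin n → Vec p → ℝ) (μ Lc : Fin n → ℝ) (L : ℝ)
    (hμpos : ∀ i, 0 < μ i) (hLpos : ∀ i, 0 < Lc i)
    (hsc : ∀ i, StrongConvexOn Set.univ (μ i) (f i))
    (hdiff : ∀ i, Differentiable ℝ (f i))
    (hLip : ∀ i, LipschitzWith (Real.toNNReal (Lc i)) (fun z => gradient (f i) z))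
    (hLmax : IsGreatest (Set.range Lc) L)
    -- u*: the concatenation of the unique minimizers uᵢ* of the fᵢ
    (ustar : CVec n p) (hustar : ∀ i, ∀ z, f i (ustar i) ≤ f i z)
    -- W is symmetric, doubly stochastic, with eigenvalues in (−1, 1]
    (W : Matrix (Fin n) (Fin n) ℝ)
    (hrow : ∀ i, ∑ j, W i j = 1) (hcol : ∀ j, ∑ i, W i j = 1)
    (hWnn : ∀ i j, 0 ≤ W i j)
    -- β ∈ (0,1): the second largest magnitude of the eigenvalues of W
    (β : ℝ) (hβmem : β ∈ Set.Ioo (0 : ℝ) 1)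
    -- stepsize 0 < α < 1/L
    (α : ℝ) (hα : 0 < α) (hαlt : α < 1 / L)
    -- NEAR-DGDᵗ iterates: x_k = Zᵗ y_k, y_{k+1} = x_k − α∇f(x_k), with y₀ = (s₀;…;s₀)
    (x y : ℕ → CVec n p)
    (hxdef : ∀ k, x k = kron (W ^ t) (y k))
    (hydef : ∀ k, y (k + 1) = x k - α • gradConcat f (x k))
    -- γ = minᵢ μᵢLᵢ/(μᵢ + Lᵢ), ν = 2αγ, and the bound D
    (γ ν D : ℝ)
    (hγ : IsLeast (Set.range fun i => μ i * Lc i / (μ i + Lc i)) γ)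
    (hν : ν = 2 * α * γ)
    (hD : D = ‖y 0 - ustar‖ + ((ν + 4) / ν) * ‖ustar‖)
    -- the mean of the y-iterates
    (ybar : ℕ → Vec p) (hybar : ∀ k, ybar k = (n : ℝ)⁻¹ • ∑ i, y k i) :
    ∀ k, 1 ≤ k → ∀ i, ‖y k i - ybar k‖ ≤ β ^ t * D + 2 * D := by
  obtain ⟨⟨jL, rfl⟩, hLmax⟩ := hLmax
  obtain ⟨⟨jγ, rfl⟩, hγmin⟩ := hγ
  have : Nonempty (Fin p) := ⟨⟨0, hp⟩⟩
  have hLip' i : LipschitzWith (NNReal.mk (Lc i) (hLpos i).le) (gradient (f i)) :=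
    Real.toNNReal_of_nonneg (hLpos i).le ▸ hLip i
  have hμL i : μ i ≤ Lc i := (hsc i).le_of_lipschitzWith_gradient (hdiff i) (hLip' i)
  have hαL : α * Lc jL < 1 := by rwa [lt_div_iff₀ (hLpos jL)] at hαlt
  have hν0 : 0 < ν := by
    have := hμpos jγ; have := hLpos jγ; rw [hν]; positivity
  have hν1 : ν ≤ 1 := by
    rw [hν]; nlinarith [hγmin ⟨jL, rfl⟩, mul_div_add_le_half (hμpos jL) (hμL jL)]
  have hu i : gradient (f i) (ustar i) = 0 := by
    simp [gradient, IsLocalMin.fderiv_eq_zero (Eventually.of_forall (hustar i))]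
  have hstep i z : ‖z - α • gradient (f i) z - ustar i‖ ^ 2 ≤ (1 - ν) * ‖z - ustar i‖ ^ 2 :=
    ((hsc i).norm_sub_smul_gradient_sub_sq_le (hdiff i) (hLip' i) (hμpos i) (hμL i) (hu i) hα.le
      (show α * (μ i + Lc i) ≤ 2 by nlinarith [hμL i, hLmax ⟨i, rfl⟩]) z).trans
      (by rw [hν]; gcongr; exact hγmin ⟨i, rfl⟩)
  have hW : W ^ t ∈ doublyStochastic ℝ (Fin n) :=
    Submonoid.pow_mem _ (mem_doublyStochastic_iff_sum.2 ⟨hWnn, hrow, hcol⟩) t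
  have hbound k i : ‖y k i‖ ≤ D := by
    have := norm_sub_le_of_sq_contraction hW hν0 hν1 (norm_sub_smul_gradConcat_sub_sq_le hstep)
      (y := y) (fun k => by rw [hydef, hxdef]) k
    have hsplit : (ν + 4) / ν * ‖ustar‖ = 4 / ν * ‖ustar‖ + ‖ustar‖ := by field_simp; ring
    rw [hD, hsplit]
    linarith [(PiLp.norm_apply_le (y k) i).trans (norm_le_norm_sub_add (y k) ustar)]
  intro k _ i
  rw [hybar]
  nlinarith [norm_sub_inv_card_smul_sum_le (hbound k) i, (norm_nonneg _).trans (hbound 0 i),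
    pow_nonneg hβmem.1.le t]

/-- Bounded deviation for the y-iterates of NEAR-DGDᵗ: if `0 < α < 1/L`
and `y_{i,0} = s₀` for all `i`, then for all `k ≥ 1` and all `i`:
`‖y_{i,k} − ȳ_k‖ ≤ βᵗD + 2D`. -/
theorem near_dgdt_bounded_deviation_y_iterates
    (n p t : ℕ) (hn : 1 ≤ n) (hp : 1 ≤ p) (ht : 1 ≤ t)
    -- local objective functions: μᵢ-strongly convex, differentiable,
    -- with Lᵢ-Lipschitz gradients
    (f : Fin n → Vec p → ℝ) (μ Lc : Fin n → ℝ) (L : ℝ)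
    (hμpos : ∀ i, 0 < μ i) (hLpos : ∀ i, 0 < Lc i)
    (hsc : ∀ i, StrongConvexOn Set.univ (μ i) (f i))
    (hdiff : ∀ i, Differentiable ℝ (f i))
    (hLip : ∀ i, LipschitzWith (Real.toNNReal (Lc i)) (fun z => gradient (f i) z))
    (hLmax : IsGreatest (Set.range Lc) L)
    -- u*: the concatenation of the unique minimizers uᵢ* of the fᵢ
    (ustar : CVec n p) (hustar : ∀ i, ∀ z, f i (ustar i) ≤ f i z)
    -- W is symmetric, doubly stochastic, with eigenvalues in (−1, 1]
    (W : Matrix (Fin n) (Fin n) ℝ) (hWsymm : W.IsHermitian)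
    (hrow : ∀ i, ∑ j, W i j = 1) (hcol : ∀ j, ∑ i, W i j = 1)
    (hWnn : ∀ i j, 0 ≤ W i j)
    (heig : ∀ i, hWsymm.eigenvalues i ∈ Set.Ioc (-1 : ℝ) 1)
    (hone : ∃! i, hWsymm.eigenvalues i = 1)
    -- β ∈ (0,1): the second largest magnitude of the eigenvalues of W
    (β : ℝ) (hβmem : β ∈ Set.Ioo (0 : ℝ) 1)
    (hβ : IsGreatest {r : ℝ | ∃ i, hWsymm.eigenvalues i ≠ 1 ∧ r = |hWsymm.eigenvalues i|} β)
    -- stepsize 0 < α < 1/L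
    (α : ℝ) (hα : 0 < α) (hαlt : α < 1 / L)
    -- NEAR-DGDᵗ iterates: x_k = Zᵗ y_k, y_{k+1} = x_k − α∇f(x_k), with y₀ = (s₀;…;s₀)
    (x y : ℕ → CVec n p)
    (hxdef : ∀ k, x k = kron (W ^ t) (y k))
    (hydef : ∀ k, y (k + 1) = x k - α • gradConcat f (x k))
    (s0 : Vec p) (hy0 : ∀ i, y 0 i = s0)
    -- γ = minᵢ μᵢLᵢ/(μᵢ + Lᵢ), ν = 2αγ, and the bound D
    (γ ν D : ℝ)
    (hγ : IsLeast (Set.range fun i => μ i * Lc i / (μ i + Lc i)) γ)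
    (hν : ν = 2 * α * γ)
    (hD : D = ‖y 0 - ustar‖ + ((ν + 4) / ν) * ‖ustar‖)
    -- the mean of the y-iterates
    (ybar : ℕ → Vec p) (hybar : ∀ k, ybar k = (n : ℝ)⁻¹ • ∑ i, y k i) :
    ∀ k, 1 ≤ k → ∀ i, ‖y k i - ybar k‖ ≤ β ^ t * D + 2 * D :=
  near_dgdt_bounded_deviation_y_iterates_general n p t hp f μ Lc L hμpos hLpos hsc hdiff hLip hLmax
    ustar hustar W hrow hcol hWnn β hβmem α hα hαlt x y hxdef hydef γ ν D hγ hν hD ybar hybar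
end
end
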